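/- For every ε > 0 there exists a constant c = c(ε) > 0 such that for all integers N and k with 3 ≤ k ≤ N−1, φ³_{N−1−k, k−2} / φ³_{N−3, 1} ≤ c · (3/4 + ε)^k. (Equivalently: uniformly in N, the probability that the root vertex of a uniform rooted type III triangulation of the sphere with N vertices has degree k is at most c(3/4+ε)^k.) -/
import Mathlib


/-- The number of rooted type III triangulations of a disc with m+2 boundary
vertices and n internal vertices (for m ≥ 1). -/
noncomputable def phi3 (n m : ℕ) : ℝ :=
  (2 * Nat.factorial (2 * m + 1) * Nat.factorial (4 * n + 2 * m - 1) : ℝ) /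
    (Nat.factorial (m - 1) * Nat.factorial (m + 1) * Nat.factorial n *
      Nat.factorial (3 * n + 2 * m + 1))

lemma factR_pos (n : ℕ) : (0:ℝ) < (Nat.factorial n : ℝ) := by
  exact_mod_cast Nat.factorial_pos n

lemma phi3_pos (n m : ℕ) : 0 < phi3 n m := by
  unfold phi3
  apply div_pos
  · exact mul_pos (mul_pos two_pos (factR_pos _)) (factR_pos _)
  · exact mul_pos (mul_pos (mul_pos (factR_pos _) (factR_pos _)) (factR_pos _)) (factR_pos _)

lemma cfs (m n : ℕ) (h : m = n + 1) : (Nat.factorial m : ℝ) = ((n:ℝ)+1) * Nat.factorial n := by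
  subst h
  push_cast [Nat.factorial_succ]
  ring

lemma phi3_m (a b : ℕ) :
    phi3 b (a+1) = (2 * (Nat.factorial (2*a+3) : ℝ) * Nat.factorial (4*b+2*a+1)) /
      ((Nat.factorial a : ℝ) * Nat.factorial (a+2) * Nat.factorial b * Nat.factorial (3*b+2*a+3)) := by
  unfold phi3
  rw [show 2*(a+1)+1 = 2*a+3 by ring, show 4*b+2*(a+1)-1 = 4*b+2*a+1 by omega,
      show a+1-1 = a by omega, show a+1+1 = a+2 by ring, show 3*b+2*(a+1)+1 = 3*b+2*a+3 by ring]

lemma phi3_m2 (a b : ℕ) :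
    phi3 b (a+2) = (2 * (Nat.factorial (2*a+5) : ℝ) * Nat.factorial (4*b+2*a+3)) /
      ((Nat.factorial (a+1) : ℝ) * Nat.factorial (a+3) * Nat.factorial b * Nat.factorial (3*b+2*a+5)) := by
  unfold phi3
  rw [show 2*(a+2)+1 = 2*a+5 by ring, show 4*b+2*(a+2)-1 = 4*b+2*a+3 by omega,
      show a+2-1 = a+1 by omega, show a+2+1 = a+3 by ring, show 3*b+2*(a+2)+1 = 3*b+2*a+5 by ring]

lemma phi3_one (n : ℕ) :
    phi3 n 1 = (12 * (Nat.factorial (4*n+1) : ℝ)) / (2 * (Nat.factorial n : ℝ) * Nat.factorial (3*n+3)) := by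
  unfold phi3
  rw [show 2*1+1 = 3 by norm_num, show 4*n+2*1-1 = 4*n+1 by omega,
      show (1:ℕ)-1 = 0 by norm_num, show (1:ℕ)+1 = 2 by norm_num,
      show 3*n+2*1+1 = 3*n+3 by ring,
      show Nat.factorial 3 = 6 from rfl, show Nat.factorial 0 = 1 from rfl,
      show Nat.factorial 2 = 2 from rfl]
  push_cast
  ring

noncomputable def Rq (a b : ℕ) : ℝ :=
  ((2*(a:ℝ)+5)*(2*(a:ℝ)+4)*(4*(b:ℝ)+2*(a:ℝ)+3)*(4*(b:ℝ)+2*(a:ℝ)+2)*((a:ℝ)+(b:ℝ)+2)*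
    (3*(a:ℝ)+3*(b:ℝ)+9)*(3*(a:ℝ)+3*(b:ℝ)+8)*(3*(a:ℝ)+3*(b:ℝ)+7)) /
  (((a:ℝ)+1)*((a:ℝ)+3)*(3*(b:ℝ)+2*(a:ℝ)+5)*(3*(b:ℝ)+2*(a:ℝ)+4)*
    (4*(a:ℝ)+4*(b:ℝ)+9)*(4*(a:ℝ)+4*(b:ℝ)+8)*(4*(a:ℝ)+4*(b:ℝ)+7)*(4*(a:ℝ)+4*(b:ℝ)+6))

lemma Rq_nonneg (a b : ℕ) : 0 ≤ Rq a b := by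
  unfold Rq
  positivity

lemma rec_eq (a b : ℕ) :
    phi3 b (a+2) / phi3 (a+b+2) 1 = Rq a b * (phi3 b (a+1) / phi3 (a+b+1) 1) := by
  rw [phi3_m2 a b, phi3_m a b, phi3_one, phi3_one]
  rw [show 4*(a+b+2)+1 = 4*a+4*b+9 by ring, show 3*(a+b+2)+3 = 3*a+3*b+9 by ring,
      show 4*(a+b+1)+1 = 4*a+4*b+5 by ring, show 3*(a+b+1)+3 = 3*a+3*b+6 by ring]
  rw [cfs (2*a+5) (2*a+4) (by omega), cfs (2*a+4) (2*a+3) (by omega),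
      cfs (4*b+2*a+3) (4*b+2*a+2) (by omega), cfs (4*b+2*a+2) (4*b+2*a+1) (by omega),
      cfs (a+1) a (by omega), cfs (a+3) (a+2) (by omega),
      cfs (3*b+2*a+5) (3*b+2*a+4) (by omega), cfs (3*b+2*a+4) (3*b+2*a+3) (by omega),
      cfs (4*a+4*b+9) (4*a+4*b+8) (by omega), cfs (4*a+4*b+8) (4*a+4*b+7) (by omega),
      cfs (4*a+4*b+7) (4*a+4*b+6) (by omega), cfs (4*a+4*b+6) (4*a+4*b+5) (by omega),
      cfs (a+b+2) (a+b+1) (by omega),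
      cfs (3*a+3*b+9) (3*a+3*b+8) (by omega), cfs (3*a+3*b+8) (3*a+3*b+7) (by omega),
      cfs (3*a+3*b+7) (3*a+3*b+6) (by omega)]
  unfold Rq
  have n1 := (factR_pos (2*a+3)).ne'
  have n2 := (factR_pos (4*b+2*a+1)).ne'
  have n3 := (factR_pos a).ne'
  have n4 := (factR_pos (a+2)).ne'
  have n5 := (factR_pos b).ne'
  have n6 := (factR_pos (3*b+2*a+3)).ne'
  have n7 := (factR_pos (4*a+4*b+5)).ne'
  have n8 := (factR_pos (a+b+1)).ne'
  have n9 := (factR_pos (3*a+3*b+6)).ne'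
  have p1 : ((a:ℝ)+1) ≠ 0 := by positivity
  have p2 : ((a:ℝ)+3) ≠ 0 := by positivity
  have p3 : (3*(b:ℝ)+2*(a:ℝ)+5) ≠ 0 := by positivity
  have p4 : (3*(b:ℝ)+2*(a:ℝ)+4) ≠ 0 := by positivity
  have p5 : (4*(a:ℝ)+4*(b:ℝ)+9) ≠ 0 := by positivity
  have p6 : (4*(a:ℝ)+4*(b:ℝ)+8) ≠ 0 := by positivity
  have p7 : (4*(a:ℝ)+4*(b:ℝ)+7) ≠ 0 := by positivity
  have p8 : (4*(a:ℝ)+4*(b:ℝ)+6) ≠ 0 := by positivity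
  push_cast
  field_simp
  ring

lemma key_nat (a b : ℕ) :
    4*(a+1)*((2*a+5)*(2*a+4)*(4*b+2*a+3)*(4*b+2*a+2)*(a+b+2)*(3*a+3*b+9)*(3*a+3*b+8)*(3*a+3*b+7))
    ≤ 3*(a+2)*((a+1)*(a+3)*(3*b+2*a+5)*(3*b+2*a+4)*(4*a+4*b+9)*(4*a+4*b+8)*(4*a+4*b+7)*(4*a+4*b+6)) :=
  Nat.le.intro (k := 604800 + 1440864*b + 1214448*b^2 + 515760*b^3 + 162240*b^4 + 46656*b^5 + 6912*b^6 + 2833920*a + 6124608*a*b + 4814472*a*b^2 + 1950360*a*b^3 + 533664*a*b^4 + 108000*a*b^5 + 10368*a*b^6 + 5832480*a^2 + 11273352*a^2*b + 8067384*a^2*b^2 + 2970096*a^2*b^3 + 662880*a^2*b^4 + 84960*a^2*b^5 + 3456*a^2*b^6 + 6943392*a^3 + 11782704*a^3*b + 7422504*a^3*b^2 + 2329320*a^3*b^3 + 385728*a^3*b^4 + 25920*a^3*b^5 + 5282688*a^4 + 7663512*a^4*b + 4049400*a^4*b^2 + 992352*a^4*b^3 + 104832*a^4*b^4 + 2304*a^4*b^5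 + 2668656*a^5 + 3178032*a^5*b + 1308528*a^5*b^2 + 217728*a^5*b^3 + 10560*a^5*b^4 + 896160*a^6 + 820320*a^6*b + 231552*a^6*b^2 + 19200*a^6*b^3 + 193008*a^7 + 120384*a^7*b + 17280*a^7*b^2 + 24192*a^8 + 7680*a^8*b + 1344*a^9) (by ring)

lemma base_nat (b : ℕ) :
    (b+1)*(3*b+6)*(3*b+5)*(3*b+4) ≤ (4*b+5)*(4*b+4)*(4*b+3)*(4*b+2) :=
  Nat.le.intro (k := 274*b + 779*b^2 + 734*b^3 + 229*b^4) (by ring)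

lemma Rq_le (a b : ℕ) : Rq a b ≤ 3/4 * (((a:ℝ)+2)/((a:ℝ)+1)) := by
  have hnat := key_nat a b
  have hr : ((4*(a+1)*((2*a+5)*(2*a+4)*(4*b+2*a+3)*(4*b+2*a+2)*(a+b+2)*(3*a+3*b+9)*(3*a+3*b+8)*(3*a+3*b+7)) : ℕ) : ℝ)
      ≤ ((3*(a+2)*((a+1)*(a+3)*(3*b+2*a+5)*(3*b+2*a+4)*(4*a+4*b+9)*(4*a+4*b+8)*(4*a+4*b+7)*(4*a+4*b+6)) : ℕ) : ℝ) :=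
    Nat.cast_le.mpr hnat
  push_cast at hr
  unfold Rq
  rw [div_mul_div_comm, div_le_div_iff₀ (by positivity) (by positivity)]
  nlinarith [hr]

lemma base_le (b : ℕ) : phi3 b 1 / phi3 (b+1) 1 ≤ 1 := by
  rw [div_le_one (phi3_pos _ _), phi3_one b, phi3_one (b+1)]
  rw [show 4*(b+1)+1 = 4*b+5 by ring, show 3*(b+1)+3 = 3*b+6 by ring]
  rw [cfs (4*b+5) (4*b+4) (by omega), cfs (4*b+4) (4*b+3) (by omega),
      cfs (4*b+3) (4*b+2) (by omega), cfs (4*b+2) (4*b+1) (by omega),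
      cfs (b+1) b (by omega),
      cfs (3*b+6) (3*b+5) (by omega), cfs (3*b+5) (3*b+4) (by omega),
      cfs (3*b+4) (3*b+3) (by omega)]
  have n1 := factR_pos (4*b+1)
  have n2 := factR_pos b
  have n3 := factR_pos (3*b+3)
  have hnat := base_nat b
  have hr : (((b+1)*(3*b+6)*(3*b+5)*(3*b+4) : ℕ) : ℝ) ≤ (((4*b+5)*(4*b+4)*(4*b+3)*(4*b+2) : ℕ) : ℝ) :=
    Nat.cast_le.mpr hnat
  push_cast at hr
  rw [div_le_div_iff₀ (by positivity) (by positivity)]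
  push_cast
  nlinarith [hr, mul_pos (mul_pos n1 n2) n3,
    mul_le_mul_of_nonneg_right hr (le_of_lt (mul_pos (mul_pos n1 n2) n3))]

/-- for every ε > 0 there is c = c(ε) > 0 such that uniformly in N,
for 3 ≤ k ≤ N−1, the root-degree probability φ³_{N−1−k,k−2}/φ³_{N−3,1} is at most
c · (3/4 + ε)^k. -/
theorem root_degree_exponential_bound (ε : ℝ) (hε : 0 < ε) :
    ∃ c : ℝ, 0 < c ∧ ∀ N k : ℕ, 3 ≤ k → k + 1 ≤ N →
      phi3 (N - 1 - k) (k - 2) / phi3 (N - 3) 1 ≤ c * (3 / 4 + ε) ^ k := by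
  obtain ⟨a₀, ha₀⟩ := exists_nat_gt (3/(4*ε))
  set ρ : ℝ := 3/4 + ε with hρdef
  have hρpos : 0 < ρ := by positivity
  set K : ℝ := max ρ (3/2) with hKdef
  have hKρ : ρ ≤ K := le_max_left _ _
  have hK32 : (3:ℝ)/2 ≤ K := le_max_right _ _
  have hK1 : (1:ℝ) ≤ K := by linarith
  have hKpos : (0:ℝ) < K := by linarith
  -- Rq bounds
  have hRqK : ∀ a b : ℕ, Rq a b ≤ K := by
    intro a b
    have h1 := Rq_le a b
    have h2 : ((a:ℝ)+2)/((a:ℝ)+1) ≤ 2 := by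
      rw [div_le_iff₀ (by positivity)]
      have : (0:ℝ) ≤ (a:ℝ) := Nat.cast_nonneg a
      linarith
    nlinarith
  have hRqρ : ∀ a b : ℕ, a₀ ≤ a → Rq a b ≤ ρ := by
    intro a b ha
    have h1 := Rq_le a b
    have hcast : (a₀:ℝ) ≤ (a:ℝ) := Nat.cast_le.mpr ha
    have h3 : 3/(4*ε) < (a:ℝ) := lt_of_lt_of_le ha₀ hcast
    have h4 : (3:ℝ)/4 < ε * (a:ℝ) := by
      rw [div_lt_iff₀ (by positivity)] at h3
      nlinarith
    have h7 : (3:ℝ)/4 * (((a:ℝ)+2)/((a:ℝ)+1)) ≤ ρ := by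
      rw [div_mul_div_comm, div_le_iff₀ (by positivity), hρdef]
      nlinarith
    exact le_trans h1 h7
  -- main induction
  have key : ∀ a : ℕ, ∀ b : ℕ,
      phi3 b (a+1) / phi3 (a+b+1) 1 ≤ K ^ (min a a₀) * ρ ^ (a - min a a₀) := by
    intro a
    induction a with
    | zero =>
      intro b
      have hb := base_le b
      simpa using hb
    | succ a ih =>
      intro b
      have hgpos : 0 ≤ phi3 b (a+1) / phi3 (a+b+1) 1 :=
        le_of_lt (div_pos (phi3_pos _ _) (phi3_pos _ _))
      rw [show a+1+1 = a+2 by omega, show a+1+b+1 = a+b+2 by omega, rec_eq a b]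
      rcases le_or_gt (a+1) a₀ with h | h
      · have hmin1 : min (a+1) a₀ = a+1 := min_eq_left h
        have hmin2 : min a a₀ = a := min_eq_left (by omega)
        have ihb := ih b
        rw [hmin2, Nat.sub_self, pow_zero, mul_one] at ihb
        rw [hmin1, Nat.sub_self, pow_zero, mul_one]
        calc Rq a b * (phi3 b (a+1) / phi3 (a+b+1) 1) ≤ K * K ^ a :=
              mul_le_mul (hRqK a b) ihb hgpos (le_of_lt hKpos)
          _ = K ^ (a+1) := by rw [pow_succ]; ring
      · have ha₀a : a₀ ≤ a := by omega
        have hmin1 : min (a+1) a₀ = a₀ := min_eq_right (by omega)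
        have hmin2 : min a a₀ = a₀ := min_eq_right ha₀a
        have ihb := ih b
        rw [hmin2] at ihb
        rw [hmin1, show a+1-a₀ = (a-a₀)+1 by omega]
        calc Rq a b * (phi3 b (a+1) / phi3 (a+b+1) 1)
            ≤ ρ * (K ^ a₀ * ρ ^ (a - a₀)) :=
              mul_le_mul (hRqρ a b ha₀a) ihb hgpos (le_of_lt hρpos)
          _ = K ^ a₀ * ρ ^ ((a-a₀)+1) := by rw [pow_succ]; ring
  -- conclusion
  refine ⟨K ^ a₀ * (4/3) ^ (a₀+3), by positivity, ?_⟩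
  intro N k hk hN
  obtain ⟨a, rfl⟩ : ∃ a, k = a+3 := ⟨k-3, by omega⟩
  obtain ⟨b, rfl⟩ : ∃ b, N = a+b+4 := ⟨N-a-4, by omega⟩
  rw [show a+b+4-1-(a+3) = b by omega, show a+3-2 = a+1 by omega,
      show a+b+4-3 = a+b+1 by omega]
  refine le_trans (key a b) ?_
  have hρ34 : (3:ℝ)/4 ≤ ρ := by rw [hρdef]; linarith
  rcases le_or_gt a a₀ with h | h
  · have hmin : min a a₀ = a := min_eq_left h
    rw [hmin, Nat.sub_self, pow_zero, mul_one]
    have h1 : K ^ a ≤ K ^ a₀ := pow_le_pow_right₀ hK1 h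
    have h2 : ((3:ℝ)/4) ^ (a₀+3) ≤ ρ ^ (a+3) := by
      calc ((3:ℝ)/4) ^ (a₀+3) ≤ ((3:ℝ)/4) ^ (a+3) :=
            pow_le_pow_of_le_one (by norm_num) (by norm_num) (by omega)
        _ ≤ ρ ^ (a+3) := pow_le_pow_left₀ (by norm_num) hρ34 _
    have h3 : (1:ℝ) = (4/3)^(a₀+3) * ((3:ℝ)/4)^(a₀+3) := by
      rw [← mul_pow]; norm_num
    calc K ^ a ≤ K ^ a₀ := h1
      _ = K ^ a₀ * ((4/3)^(a₀+3) * ((3:ℝ)/4)^(a₀+3)) := by rw [← h3]; ring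
      _ ≤ K ^ a₀ * ((4/3)^(a₀+3) * ρ ^ (a+3)) := by
          have : (0:ℝ) ≤ K ^ a₀ * (4/3)^(a₀+3) := by positivity
          nlinarith [h2, this]
      _ = K ^ a₀ * (4/3) ^ (a₀+3) * ρ ^ (a+3) := by ring
  · have hmin : min a a₀ = a₀ := min_eq_right (le_of_lt h)
    rw [hmin]
    have hsplit : a + 3 = (a - a₀) + (a₀ + 3) := by omega
    rw [show ρ ^ (a+3) = ρ ^ (a-a₀) * ρ ^ (a₀+3) by rw [← pow_add, ← hsplit]]
    have h4 : (1:ℝ) ≤ (4/3)^(a₀+3) * ρ ^ (a₀+3) := by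
      rw [← mul_pow]
      have hge : (1:ℝ) ≤ 4/3*ρ := by rw [hρdef]; nlinarith
      calc (1:ℝ) = 1 ^ (a₀+3) := (one_pow _).symm
        _ ≤ (4/3*ρ) ^ (a₀+3) := pow_le_pow_left₀ (by norm_num) hge _
    calc K ^ a₀ * ρ ^ (a - a₀)
        = K ^ a₀ * ρ ^ (a-a₀) * 1 := by ring
      _ ≤ K ^ a₀ * ρ ^ (a-a₀) * ((4/3)^(a₀+3) * ρ ^ (a₀+3)) := by
          have : (0:ℝ) ≤ K ^ a₀ * ρ ^ (a-a₀) := by positivity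
          nlinarith [h4, this]
      _ = K ^ a₀ * (4/3) ^ (a₀+3) * (ρ ^ (a-a₀) * ρ ^ (a₀+3)) := by ring
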